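/- arXiv:2603.10296 — 3 statements merged into one kernel-verified Lean document; each statement's English description precedes it below -/
import Mathlib

section
/- For every density operator ρ on ℂ³ ⊗ ℂ³ (i.e., every positive semidefinite matrix ρ ∈ M₉(ℂ) with trace 1) and every choice of unit vectors a, a', b, b' ∈ ℝ³, one has |tr(ρ · B(a,a',b,b'))| ≤ 2. In other words, no two-qutrit state violates the CHSH inequality under spin-1 measurements. -/
/-!
Write `B = S(a) ⊗ S(p) + S(a') ⊗ S(q)` with `p = b + b'`, `q = b - b'`, so that `p ⊥ q` and
`|p|² + |q|² = 4`. For spin 1, `S(p) S(q) = (p·q) - |c_q⟩⟨c_p|`, where `c_u` is `u` written in the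
eigenbasis of `S_z`. Hence `‖S(u) w‖² = |u|² ‖w‖² - |⟨c_u, w⟩|²`, and for `p ⊥ q` the cross term
of the two summands of `B x` only involves the contractions `y_p`, `y_q` of `x` against `c_p`,
`c_q` in the second factor. As `‖S(a)‖, ‖S(a')‖ ≤ 1`,
`‖B x‖² ≤ (|p|² ‖x‖² - ‖y_p‖²) + (|q|² ‖x‖² - ‖y_q‖²) + 2 ‖y_p‖ ‖y_q‖ ≤ 4 ‖x‖²`,
so `|⟨x, B x⟩| ≤ 2 ‖x‖²`, and writing `ρ = C* C` turns `tr(ρ B)` into a sum of such quadratic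
forms with total weight `tr ρ = 1`.
-/

open Matrix Polynomial
open scoped Kronecker Matrix.Norms.L2Operator ComplexOrder

noncomputable def Sx : Matrix (Fin 3) (Fin 3) ℂ :=
  ((Real.sqrt 2 : ℝ) : ℂ)⁻¹ • !![0, 1, 0; 1, 0, 1; 0, 1, 0]

noncomputable def Sy : Matrix (Fin 3) (Fin 3) ℂ :=
  ((Real.sqrt 2 : ℝ) : ℂ)⁻¹ •
    !![0, -Complex.I, 0; Complex.I, 0, -Complex.I; 0, Complex.I, 0]

def Sz : Matrix (Fin 3) (Fin 3) ℂ := !![1, 0, 0; 0, 0, 0; 0, 0, -1]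

noncomputable def Svec : Fin 3 → Matrix (Fin 3) (Fin 3) ℂ := ![Sx, Sy, Sz]

noncomputable def Sdir (u : Fin 3 → ℝ) : Matrix (Fin 3) (Fin 3) ℂ :=
  (u 0 : ℂ) • Sx + (u 1 : ℂ) • Sy + (u 2 : ℂ) • Sz

noncomputable def Bell (a a' b b' : Fin 3 → ℝ) :
    Matrix (Fin 3 × Fin 3) (Fin 3 × Fin 3) ℂ :=
  Sdir a ⊗ₖ Sdir b + Sdir a ⊗ₖ Sdir b' + Sdir a' ⊗ₖ Sdir b - Sdir a' ⊗ₖ Sdir b'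

noncomputable def K (M : Matrix (Fin 3) (Fin 3) ℝ) :
    Matrix (Fin 3 × Fin 3) (Fin 3 × Fin 3) ℂ :=
  ∑ i : Fin 3, ∑ j : Fin 3, (M i j : ℂ) • (Svec i ⊗ₖ Svec j)

noncomputable def Hst (s t : ℝ) : Matrix (Fin 3 × Fin 3) (Fin 3 × Fin 3) ℂ :=
  (s : ℂ) • (Sx ⊗ₖ Sx) + (t : ℂ) • (Sz ⊗ₖ Sz)

noncomputable def ket (i j : Fin 3) : (Fin 3 × Fin 3) → ℂ := Pi.single (i, j) 1

def IsUnitVec (u : Fin 3 → ℝ) : Prop := u 0 ^ 2 + u 1 ^ 2 + u 2 ^ 2 = 1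

open WithLp (toLp)

section

variable {𝕜 m n ι : Type*} [RCLike 𝕜] [Fintype m] [Fintype n] [Fintype ι]

lemma norm_star_dotProduct_le (v w : ι → 𝕜) :
    ‖star v ⬝ᵥ w‖ ≤ ‖toLp 2 v‖ * ‖toLp 2 w‖ := by
  simpa [EuclideanSpace.inner_toLp_toLp, dotProduct_comm] using
    norm_inner_le_norm (𝕜 := 𝕜) (toLp 2 v) (toLp 2 w)

lemma norm_toLp_add_sq_le (v w : ι → 𝕜) :
    ‖toLp 2 (v + w)‖ ^ 2 ≤ ‖toLp 2 v‖ ^ 2 + ‖toLp 2 w‖ ^ 2 + 2 * ‖star v ⬝ᵥ w‖ := by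
  have hre := RCLike.re_le_norm (inner 𝕜 (toLp 2 v) (toLp 2 w))
  rw [EuclideanSpace.inner_toLp_toLp, dotProduct_comm] at hre
  rw [WithLp.toLp_add, norm_add_sq (𝕜 := 𝕜), EuclideanSpace.inner_toLp_toLp, dotProduct_comm]
  linarith

lemma ofReal_norm_toLp_sq (v : ι → 𝕜) : ((‖toLp 2 v‖ ^ 2 : ℝ) : 𝕜) = star v ⬝ᵥ v := by
  rw [RCLike.ofReal_pow, ← inner_self_eq_norm_sq_to_K, EuclideanSpace.inner_toLp_toLp,
    dotProduct_comm]

lemma ofReal_norm_mulVec_sq (M : Matrix ι ι 𝕜) (v : ι → 𝕜) :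
    ((‖toLp 2 (M *ᵥ v)‖ ^ 2 : ℝ) : 𝕜) = star v ⬝ᵥ ((Mᴴ * M) *ᵥ v) := by
  rw [ofReal_norm_toLp_sq, star_mulVec, ← dotProduct_mulVec, mulVec_mulVec]

lemma norm_toLp_sq_eq_sum_rows (x : m × n → 𝕜) :
    ‖toLp 2 x‖ ^ 2 = ∑ i, ‖toLp 2 (Function.curry x i)‖ ^ 2 := by
  simp only [EuclideanSpace.norm_sq_eq, Fintype.sum_prod_type, Function.curry_apply]

lemma norm_toLp_sq_eq_sum_cols (x : m × n → 𝕜) :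
    ‖toLp 2 x‖ ^ 2 = ∑ j, ‖toLp 2 (fun i => x (i, j))‖ ^ 2 := by
  simp only [EuclideanSpace.norm_sq_eq, Fintype.sum_prod_type]
  exact Finset.sum_comm

lemma kronecker_one_mulVec_apply [DecidableEq n] (A : Matrix m m 𝕜) (x : m × n → 𝕜)
    (i : m) (j : n) : ((A ⊗ₖ (1 : Matrix n n 𝕜)) *ᵥ x) (i, j) = (A *ᵥ fun k => x (k, j)) i := by
  simp [mulVec, dotProduct, Fintype.sum_prod_type, one_apply]

lemma one_kronecker_mulVec_apply [DecidableEq m] (B : Matrix n n 𝕜) (x : m × n → 𝕜)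
    (i : m) (j : n) : (((1 : Matrix m m 𝕜) ⊗ₖ B) *ᵥ x) (i, j) = (B *ᵥ Function.curry x i) j := by
  simp [mulVec, dotProduct, Fintype.sum_prod_type, one_apply]

lemma norm_kronecker_one_mulVec_le [DecidableEq n] {A : Matrix m m 𝕜}
    (hA : ∀ w, ‖toLp 2 (A *ᵥ w)‖ ≤ ‖toLp 2 w‖) (x : m × n → 𝕜) :
    ‖toLp 2 ((A ⊗ₖ (1 : Matrix n n 𝕜)) *ᵥ x)‖ ≤ ‖toLp 2 x‖ := by
  refine (sq_le_sq₀ (norm_nonneg _) (norm_nonneg _)).1 ?_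
  rw [norm_toLp_sq_eq_sum_cols, norm_toLp_sq_eq_sum_cols x]
  refine Finset.sum_le_sum fun j _ => ?_
  simp only [kronecker_one_mulVec_apply]
  gcongr
  exact hA _

lemma norm_one_kronecker_mulVec_sq [DecidableEq m] (B : Matrix n n 𝕜) (x : m × n → 𝕜) :
    ‖toLp 2 (((1 : Matrix m m 𝕜) ⊗ₖ B) *ᵥ x)‖ ^ 2 =
      ∑ i, ‖toLp 2 (B *ᵥ Function.curry x i)‖ ^ 2 := by
  rw [norm_toLp_sq_eq_sum_rows]
  congr! with i
  exact funext (one_kronecker_mulVec_apply B x i)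

lemma star_dotProduct_kronecker_vecMulVec_mulVec (M : Matrix m m 𝕜) (c d : n → 𝕜)
    (x : m × n → 𝕜) :
    star x ⬝ᵥ ((M ⊗ₖ vecMulVec c (star d)) *ᵥ x) =
      star (of (Function.curry x) *ᵥ star c) ⬝ᵥ (M *ᵥ (of (Function.curry x) *ᵥ star d)) := by
  simp only [dotProduct, mulVec, Fintype.sum_prod_type, kroneckerMap_apply, vecMulVec_apply,
    Pi.star_apply, of_apply, Function.curry_apply, star_sum, star_mul', star_star,
    Finset.mul_sum, Finset.sum_mul]
  refine Finset.sum_congr rfl fun i _ => ?_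
  rw [Finset.sum_comm]
  refine Finset.sum_congr rfl fun k _ => ?_
  rw [Finset.sum_comm]
  exact Finset.sum_congr rfl fun _ _ => Finset.sum_congr rfl fun _ _ => by ring

lemma star_dotProduct_vecMulVec_mulVec (c w : ι → 𝕜) :
    star w ⬝ᵥ (vecMulVec c (star c) *ᵥ w) = ((‖star c ⬝ᵥ w‖ ^ 2 : ℝ) : 𝕜) := by
  rw [RCLike.ofReal_pow, ← RCLike.conj_mul, vecMulVec_mulVec, op_smul_eq_smul,
    dotProduct_smul, star_dotProduct, smul_eq_mul, mul_comm, starRingEnd_apply, star_star]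

end

open scoped MatrixOrder in
lemma Matrix.PosSemidef.norm_trace_mul_le {n : Type*} [Fintype n] {ρ M : Matrix n n ℂ}
    (hρ : ρ.PosSemidef) {c : ℝ} (hM : ∀ x, ‖star x ⬝ᵥ (M *ᵥ x)‖ ≤ c * ‖toLp 2 x‖ ^ 2) :
    ‖(ρ * M).trace‖ ≤ c * ρ.trace.re := by
  classical
  obtain ⟨C, rfl⟩ := CStarAlgebra.nonneg_iff_eq_star_mul_self.mp hρ.nonneg
  have htrace : ∀ N, (star C * C * N).trace = ∑ i, star (star (C i)) ⬝ᵥ (N *ᵥ star (C i)) := by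
    intro N
    rw [mul_assoc, trace_mul_comm, trace]
    exact Finset.sum_congr rfl fun i _ => by rw [diag_apply, mul_mul_apply, star_star]; rfl
  have hnorm : (star C * C).trace.re = ∑ i, ‖toLp 2 (star (C i))‖ ^ 2 := by
    rw [← Matrix.mul_one (star C * C), htrace, Complex.re_sum]
    refine Finset.sum_congr rfl fun i _ => ?_
    rw [one_mulVec, ← ofReal_norm_toLp_sq (𝕜 := ℂ)]
    exact RCLike.ofReal_re (K := ℂ) _
  rw [htrace, hnorm, Finset.mul_sum]
  exact (norm_sum_le _ _).trans (Finset.sum_le_sum fun i _ => hM _)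

/-- Up to complex conjugation, the spherical components `(u₊₁, u₀, u₋₁)` of `u`.
In Cartesian coordinates `S(u)` acts on `ℂ³` as `w ↦ -i u × w`, so
`S(p) S(q) w = (p·q) w - q (p·w)`; this is `Sdir_mul_Sdir` in the eigenbasis of `Sz`. -/
noncomputable def sphericalVec (u : Fin 3 → ℝ) : Fin 3 → ℂ :=
  ![(-u 0 + u 1 * Complex.I) / Real.sqrt 2, u 2, (u 0 + u 1 * Complex.I) / Real.sqrt 2]

lemma Sdir_mul_Sdir (p q : Fin 3 → ℝ) :
    Sdir p * Sdir q =
      ((p ⬝ᵥ q : ℝ) : ℂ) • 1 - vecMulVec (sphericalVec q) (star (sphericalVec p)) := by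
  have h2 : Real.sqrt 2 ^ 2 = 2 := Real.sq_sqrt zero_le_two
  ext i j
  simp only [Matrix.sub_apply, Matrix.smul_apply, vecMulVec_apply, mul_apply, Fin.sum_univ_three,
    Pi.star_apply, dotProduct]
  fin_cases i <;> fin_cases j <;>
    simp [Sdir, Sx, Sy, Sz, sphericalVec, Complex.ext_iff] <;>
    field_simp <;> grind

lemma Sdir_isHermitian (u : Fin 3 → ℝ) : (Sdir u).IsHermitian := by
  ext i j
  fin_cases i <;> fin_cases j <;> simp [Sdir, Sx, Sy, Sz]

lemma Sdir_add (u v : Fin 3 → ℝ) : Sdir (u + v) = Sdir u + Sdir v := by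
  simp only [Sdir, Pi.add_apply, Complex.ofReal_add, add_smul]
  abel

lemma Sdir_sub (u v : Fin 3 → ℝ) : Sdir (u - v) = Sdir u - Sdir v := by
  simp only [Sdir, Pi.sub_apply, Complex.ofReal_sub, sub_smul]
  abel

lemma norm_Sdir_mulVec_sq (u : Fin 3 → ℝ) (w : Fin 3 → ℂ) :
    ‖toLp 2 (Sdir u *ᵥ w)‖ ^ 2 = u ⬝ᵥ u * ‖toLp 2 w‖ ^ 2 - ‖star (sphericalVec u) ⬝ᵥ w‖ ^ 2 := by
  have h := ofReal_norm_mulVec_sq (Sdir u) w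
  rw [(Sdir_isHermitian u).eq, Sdir_mul_Sdir, sub_mulVec, smul_mulVec, one_mulVec,
    dotProduct_sub, dotProduct_smul, ← ofReal_norm_toLp_sq,
    star_dotProduct_vecMulVec_mulVec] at h
  exact_mod_cast h

lemma IsUnitVec.dotProduct_self {u : Fin 3 → ℝ} (hu : IsUnitVec u) : u ⬝ᵥ u = 1 := by
  simpa [IsUnitVec, dotProduct, Fin.sum_univ_three, sq] using hu

lemma IsUnitVec.norm_Sdir_mulVec_le {u : Fin 3 → ℝ} (hu : IsUnitVec u) (w : Fin 3 → ℂ) :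
    ‖toLp 2 (Sdir u *ᵥ w)‖ ≤ ‖toLp 2 w‖ := by
  refine (sq_le_sq₀ (norm_nonneg _) (norm_nonneg _)).1 ?_
  rw [norm_Sdir_mulVec_sq, hu.dotProduct_self, one_mul]
  exact sub_le_self _ (sq_nonneg _)

lemma norm_one_kronecker_Sdir_mulVec_sq {m : Type*} [Fintype m] [DecidableEq m]
    (p : Fin 3 → ℝ) (x : m × Fin 3 → ℂ) :
    ‖toLp 2 (((1 : Matrix m m ℂ) ⊗ₖ Sdir p) *ᵥ x)‖ ^ 2 =
      p ⬝ᵥ p * ‖toLp 2 x‖ ^ 2 -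
        ‖toLp 2 (of (Function.curry x) *ᵥ star (sphericalVec p))‖ ^ 2 := by
  rw [norm_one_kronecker_mulVec_sq, norm_toLp_sq_eq_sum_rows x, Finset.mul_sum,
    EuclideanSpace.norm_sq_eq, ← Finset.sum_sub_distrib]
  refine Finset.sum_congr rfl fun i _ => ?_
  rw [norm_Sdir_mulVec_sq, PiLp.toLp_apply, dotProduct_comm (star _)]
  rfl

lemma norm_kronecker_Sdir_mulVec_sq_le {a : Fin 3 → ℝ} (ha : IsUnitVec a) (p : Fin 3 → ℝ)
    (x : Fin 3 × Fin 3 → ℂ) :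
    ‖toLp 2 ((Sdir a ⊗ₖ Sdir p) *ᵥ x)‖ ^ 2 ≤
      p ⬝ᵥ p * ‖toLp 2 x‖ ^ 2 -
        ‖toLp 2 (of (Function.curry x) *ᵥ star (sphericalVec p))‖ ^ 2 := by
  refine le_of_le_of_eq ?_ (norm_one_kronecker_Sdir_mulVec_sq p x)
  have hfac : Sdir a ⊗ₖ Sdir p = (Sdir a ⊗ₖ 1) * (1 ⊗ₖ Sdir p) := by
    rw [← mul_kronecker_mul, Matrix.mul_one, Matrix.one_mul]
  rw [hfac, ← mulVec_mulVec]
  gcongr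
  exact norm_kronecker_one_mulVec_le ha.norm_Sdir_mulVec_le _

lemma star_kronecker_Sdir_mulVec_dotProduct {p q : Fin 3 → ℝ} (hpq : p ⬝ᵥ q = 0)
    (a a' : Fin 3 → ℝ) (x : Fin 3 × Fin 3 → ℂ) :
    star ((Sdir a ⊗ₖ Sdir p) *ᵥ x) ⬝ᵥ ((Sdir a' ⊗ₖ Sdir q) *ᵥ x) =
      -(star (of (Function.curry x) *ᵥ star (sphericalVec q)) ⬝ᵥ
        ((Sdir a * Sdir a') *ᵥ (of (Function.curry x) *ᵥ star (sphericalVec p)))) := by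
  have hneg : (Sdir a * Sdir a') ⊗ₖ (Sdir p * Sdir q) =
      -((Sdir a * Sdir a') ⊗ₖ vecMulVec (sphericalVec q) (star (sphericalVec p))) := by
    simpa [Sdir_mul_Sdir p q, hpq] using kronecker_smul (-1 : ℂ) (Sdir a * Sdir a')
      (vecMulVec (sphericalVec q) (star (sphericalVec p)))
  rw [star_mulVec, ← dotProduct_mulVec, mulVec_mulVec, conjTranspose_kronecker,
    (Sdir_isHermitian a).eq, (Sdir_isHermitian p).eq, ← mul_kronecker_mul, hneg, neg_mulVec,
    dotProduct_neg, star_dotProduct_kronecker_vecMulVec_mulVec]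

lemma norm_kronecker_Sdir_add_mulVec_sq_le {a a' p q : Fin 3 → ℝ} (ha : IsUnitVec a)
    (ha' : IsUnitVec a') (hpq : p ⬝ᵥ q = 0) (x : Fin 3 × Fin 3 → ℂ) :
    ‖toLp 2 ((Sdir a ⊗ₖ Sdir p + Sdir a' ⊗ₖ Sdir q) *ᵥ x)‖ ^ 2 ≤
      (p ⬝ᵥ p + q ⬝ᵥ q) * ‖toLp 2 x‖ ^ 2 := by
  set yp := of (Function.curry x) *ᵥ star (sphericalVec p)
  set yq := of (Function.curry x) *ᵥ star (sphericalVec q)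
  have hcross : ‖star ((Sdir a ⊗ₖ Sdir p) *ᵥ x) ⬝ᵥ ((Sdir a' ⊗ₖ Sdir q) *ᵥ x)‖ ≤
      ‖toLp 2 yq‖ * ‖toLp 2 yp‖ := by
    rw [star_kronecker_Sdir_mulVec_dotProduct hpq, norm_neg, ← mulVec_mulVec]
    refine (norm_star_dotProduct_le _ _).trans ?_
    gcongr
    exact (ha.norm_Sdir_mulVec_le _).trans (ha'.norm_Sdir_mulVec_le _)
  rw [add_mulVec]
  nlinarith [norm_toLp_add_sq_le ((Sdir a ⊗ₖ Sdir p) *ᵥ x) ((Sdir a' ⊗ₖ Sdir q) *ᵥ x),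
    norm_kronecker_Sdir_mulVec_sq_le ha p x, norm_kronecker_Sdir_mulVec_sq_le ha' q x,
    sq_nonneg (‖toLp 2 yp‖ - ‖toLp 2 yq‖)]

lemma Bell_eq (a a' b b' : Fin 3 → ℝ) :
    Bell a a' b b' = Sdir a ⊗ₖ Sdir (b + b') + Sdir a' ⊗ₖ Sdir (b - b') := by
  rw [Sdir_add, Sdir_sub]
  ext ⟨i, j⟩ ⟨k, l⟩
  simp only [Bell, Matrix.add_apply, Matrix.sub_apply, kroneckerMap_apply]
  ring

lemma norm_Bell_mulVec_le {a a' b b' : Fin 3 → ℝ} (ha : IsUnitVec a) (ha' : IsUnitVec a')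
    (hb : IsUnitVec b) (hb' : IsUnitVec b') (x : Fin 3 × Fin 3 → ℂ) :
    ‖toLp 2 (Bell a a' b b' *ᵥ x)‖ ≤ 2 * ‖toLp 2 x‖ := by
  have hbb' := dotProduct_comm b b'
  have horth : (b + b') ⬝ᵥ (b - b') = 0 := by
    simp only [add_dotProduct, dotProduct_sub, hb.dotProduct_self, hb'.dotProduct_self]
    linarith
  have hsum : (b + b') ⬝ᵥ (b + b') + (b - b') ⬝ᵥ (b - b') = 2 ^ 2 := by
    simp only [add_dotProduct, dotProduct_add, sub_dotProduct, dotProduct_sub,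
      hb.dotProduct_self, hb'.dotProduct_self]
    linarith
  refine (sq_le_sq₀ (norm_nonneg _) (by positivity)).1 ?_
  rw [Bell_eq, mul_pow, ← hsum]
  exact norm_kronecker_Sdir_add_mulVec_sq_le ha ha' horth x

lemma norm_star_dotProduct_Bell_mulVec_le {a a' b b' : Fin 3 → ℝ} (ha : IsUnitVec a)
    (ha' : IsUnitVec a') (hb : IsUnitVec b) (hb' : IsUnitVec b') (x : Fin 3 × Fin 3 → ℂ) :
    ‖star x ⬝ᵥ (Bell a a' b b' *ᵥ x)‖ ≤ 2 * ‖toLp 2 x‖ ^ 2 :=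
  calc ‖star x ⬝ᵥ (Bell a a' b b' *ᵥ x)‖
      ≤ ‖toLp 2 x‖ * ‖toLp 2 (Bell a a' b b' *ᵥ x)‖ := norm_star_dotProduct_le _ _
    _ ≤ ‖toLp 2 x‖ * (2 * ‖toLp 2 x‖) := by gcongr; exact norm_Bell_mulVec_le ha ha' hb hb' x
    _ = 2 * ‖toLp 2 x‖ ^ 2 := by ring

/-- Every two-qutrit density operator satisfies the CHSH inequality
under spin-1 measurements: `|tr(ρ B(a,a',b,b'))| ≤ 2`. -/
theorem chsh_density_operator_bound
    (ρ : Matrix (Fin 3 × Fin 3) (Fin 3 × Fin 3) ℂ)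
    (hρ : ρ.PosSemidef) (hρtr : ρ.trace = 1)
    (a a' b b' : Fin 3 → ℝ)
    (ha : IsUnitVec a) (ha' : IsUnitVec a') (hb : IsUnitVec b) (hb' : IsUnitVec b') :
    ‖(ρ * Bell a a' b b').trace‖ ≤ 2 := by
  have h := hρ.norm_trace_mul_le (norm_star_dotProduct_Bell_mulVec_le ha ha' hb hb')
  rwa [hρtr, Complex.one_re, mul_one] at h
end

section
/- Let M ∈ M₃(ℝ) have rank at most 2, with nonzero singular values among s, t ≥ 0 (so the singular values of M are s, t, 0). Then K(M) is unitarily equivalent to the operator H_{s,t} = s·S_x⊗S_x + t·S_z⊗S_z on ℂ³ ⊗ ℂ³; i.e., there exists a unitary W ∈ M₉(ℂ) with W K(M) W† = H_{s,t}. -/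
/-!
Conjugation by the Cartesian-to-spherical change of basis `Z` turns the spin-1 matrices into the
generators of `so(3)`: `S·ω = Z (i [ω]ₓ) Z†`, where `[ω]ₓ` is the cross-product matrix. Since
`R [ω]ₓ Rᵀ = [Rω]ₓ` for `R ∈ SO(3)`, the map `R ↦ Z R Z†` is a unitary representation with
`ρ(R) (S·ω) ρ(R)† = S·(Rω)`, and hence `K(U M Vᵀ) = (ρ U ⊗ ρ V) K(M) (ρ U ⊗ ρ V)†`.
The charpoly hypothesis says that `MᵀM` is orthogonally similar to `diag(s², 0, t²)`, which gives
a singular value decomposition `M = U diag(s, 0, t) Vᵀ`; thanks to the zero singular value the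
signs of the middle columns can be flipped so that `U, V ∈ SO(3)`. Finally
`K(diag(s, 0, t)) = H_{s,t}`.
-/

open Matrix Polynomial
open scoped Kronecker Matrix.Norms.L2Operator

namespace Matrix

variable {n : Type*} [Fintype n] [DecidableEq n]

theorem IsHermitian.exists_unitary_conj_eq_of_charpoly_eq {𝕜 : Type*} [RCLike 𝕜]
    {A B : Matrix n n 𝕜} (hA : A.IsHermitian) (hB : B.IsHermitian)
    (h : A.charpoly = B.charpoly) :
    ∃ V ∈ unitaryGroup n 𝕜, A = V * B * star V := by
  have hsA := hA.spectral_theorem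
  have hsB := hB.spectral_theorem
  rw [(hA.eigenvalues_eq_eigenvalues_iff hB).mpr h] at hsA
  generalize (diagonal (RCLike.ofReal ∘ hB.eigenvalues) : Matrix n n 𝕜) = D at hsA hsB
  generalize hA.eigenvectorUnitary = QA at hsA
  generalize hB.eigenvectorUnitary = QB at hsB
  refine ⟨_, (QA * star QB).2, ?_⟩
  rw [← Unitary.conjStarAlgAut_apply (S := 𝕜), Unitary.conjStarAlgAut_mul_apply,
    ← Unitary.conjStarAlgAut_symm, hsA, hsB, StarAlgEquiv.symm_apply_apply]

theorem exists_mem_orthogonalGroup_mul_diagonal_of_transpose_mul_self {N : Matrix n n ℝ}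
    {d : n → ℝ} (hN : Nᵀ * N = diagonal (d ^ 2)) :
    ∃ U ∈ orthogonalGroup n ℝ, N = U * diagonal d := by
  let col (a : n) : EuclideanSpace ℝ n := WithLp.toLp 2 (Nᵀ a)
  have inner_col (a b : n) : inner ℝ (col a) (col b) = if a = b then d a ^ 2 else 0 := by
    have : inner ℝ (col a) (col b) = (Nᵀ * N) a b := by
      simp [col, mul_apply, EuclideanSpace.inner_eq_star_dotProduct, dotProduct, mul_comm]
    rw [this, hN, diagonal_apply, Pi.pow_apply]
  let S : Set n := {a | d a ≠ 0}
  have hS : Orthonormal ℝ (S.domRestrict fun a => (d a)⁻¹ • col a) := by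
    rw [orthonormal_iff_ite]
    rintro ⟨a, ha⟩ ⟨b, hb⟩
    simp only [Set.domRestrict_apply, inner_smul_left, inner_smul_right, inner_col,
      conj_trivial, Subtype.mk.injEq]
    split_ifs with hab
    · subst hab
      have : d a ≠ 0 := ha
      field_simp
    · simp
  obtain ⟨b, hb⟩ := hS.exists_orthonormalBasis_extension_of_card_eq (by simp)
  refine ⟨_, (EuclideanSpace.basisFun n ℝ).toMatrix_orthonormalBasis_mem_unitary b, ?_⟩
  ext i a
  rw [mul_diagonal]
  change N i a = b a i * d a
  by_cases ha : d a = 0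
  · have : col a = 0 := by
      rw [← inner_self_eq_zero (𝕜 := ℝ), inner_col, if_pos rfl, ha]; ring
    rw [ha, mul_zero]
    exact congrFun (congrArg WithLp.ofLp this) i
  · rw [hb a ha, PiLp.smul_apply, smul_eq_mul, mul_comm, mul_inv_cancel_left₀ ha]
    rfl

theorem exists_svd_of_charpoly_eq {M : Matrix n n ℝ} {d : n → ℝ}
    (h : (Mᵀ * M).charpoly = ∏ i, (X - C (d i ^ 2))) :
    ∃ U ∈ orthogonalGroup n ℝ, ∃ V ∈ orthogonalGroup n ℝ, M = U * diagonal d * Vᵀ := by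
  obtain ⟨V, hV, hMV⟩ :=
    (isHermitian_conjTranspose_mul_self M).exists_unitary_conj_eq_of_charpoly_eq
      (isHermitian_diagonal (d ^ 2)) (by simpa [charpoly_diagonal] using h)
  rw [conjTranspose_eq_transpose_of_trivial, star_eq_conjTranspose,
    conjTranspose_eq_transpose_of_trivial] at hMV
  have hVV : Vᵀ * V = 1 := (mem_orthogonalGroup_iff' n ℝ).mp hV
  have hN : (M * V)ᵀ * (M * V) = diagonal (d ^ 2) := by
    rw [transpose_mul, mul_assoc, ← mul_assoc Mᵀ, hMV]
    simp only [← mul_assoc, hVV, one_mul]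
    rw [mul_assoc, hVV, mul_one]
  obtain ⟨U, hU, hMVU⟩ := exists_mem_orthogonalGroup_mul_diagonal_of_transpose_mul_self hN
  refine ⟨U, hU, V, hV, ?_⟩
  rw [← hMVU, mul_assoc, (mem_orthogonalGroup_iff n ℝ).mp hV, mul_one]

theorem mul_diagonal_update_det_mem_specialOrthogonalGroup {U : Matrix n n ℝ}
    (hU : U ∈ orthogonalGroup n ℝ) (i : n) :
    U * diagonal (Function.update 1 i U.det) ∈ specialOrthogonalGroup n ℝ := by
  have hdet : U.det * U.det = 1 := by
    simpa using congrArg det ((mem_orthogonalGroup_iff n ℝ).mp hU)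
  have hE : diagonal (Function.update 1 i U.det) ∈ orthogonalGroup n ℝ := by
    rw [mem_orthogonalGroup_iff, diagonal_transpose, diagonal_mul_diagonal, ← diagonal_one]
    congr 1
    funext j
    rcases eq_or_ne j i with rfl | hj <;> simp [*]
  refine mem_specialOrthogonalGroup_iff.mpr ⟨mul_mem hU hE, ?_⟩
  rw [det_mul, det_diagonal, Finset.prod_update_of_mem (Finset.mem_univ i)]
  simpa using hdet

theorem diagonal_update_one_mul_diagonal {d : n → ℝ} {i : n} (hi : d i = 0) (c : ℝ) :
    diagonal (Function.update 1 i c) * diagonal d = diagonal d := by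
  rw [diagonal_mul_diagonal]
  congr 1
  funext j
  rcases eq_or_ne j i with rfl | hj <;> simp [*]

theorem exists_specialOrthogonalGroup_mul_diagonal_mul_transpose {d : n → ℝ} {i : n}
    (hi : d i = 0) {U V : Matrix n n ℝ} (hU : U ∈ orthogonalGroup n ℝ)
    (hV : V ∈ orthogonalGroup n ℝ) :
    ∃ U' ∈ specialOrthogonalGroup n ℝ, ∃ V' ∈ specialOrthogonalGroup n ℝ,
      U * diagonal d * Vᵀ = U' * diagonal d * V'ᵀ := by
  refine ⟨_, mul_diagonal_update_det_mem_specialOrthogonalGroup hU i,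
    _, mul_diagonal_update_det_mem_specialOrthogonalGroup hV i, ?_⟩
  have hF : diagonal d * diagonal (Function.update 1 i V.det) = diagonal d :=
    (commute_diagonal _ _).eq.trans (diagonal_update_one_mul_diagonal hi _)
  conv_lhs => rw [← hF, ← diagonal_update_one_mul_diagonal hi U.det]
  simp only [transpose_mul, diagonal_transpose, mul_assoc]

theorem kronecker_mul_kronecker_mul_conjTranspose {m p : Type*} [Fintype m] [Fintype p]
    {R : Type*} [CommRing R] [StarRing R] (A X : Matrix m m R) (B Y : Matrix p p R) :
    (A ⊗ₖ B) * (X ⊗ₖ Y) * (A ⊗ₖ B)ᴴ = (A * X * Aᴴ) ⊗ₖ (B * Y * Bᴴ) := by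
  rw [conjTranspose_kronecker, ← mul_kronecker_mul, ← mul_kronecker_mul]

theorem conjTranspose_map_ofRealHom {l m : Type*} (R : Matrix l m ℝ) :
    (R.map Complex.ofRealHom)ᴴ = Rᵀ.map Complex.ofRealHom := by
  ext i j
  simp [conjTranspose_apply]

end Matrix

-- the matrix of `v ↦ ω ⨯₃ v`
def crossProductMatrix {R : Type*} [Ring R] (ω : Fin 3 → R) : Matrix (Fin 3) (Fin 3) R :=
  !![0, -ω 2, ω 1; ω 2, 0, -ω 0; -ω 1, ω 0, 0]

theorem mul_crossProductMatrix_mul_transpose {R : Type*} [CommRing R]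
    (A : Matrix (Fin 3) (Fin 3) R) (ω : Fin 3 → R) :
    A * crossProductMatrix ω * Aᵀ = crossProductMatrix (A.adjugateᵀ *ᵥ ω) := by
  ext i j
  fin_cases i <;> fin_cases j <;>
    simp [crossProductMatrix, adjugate_fin_three, mul_apply, mulVec, dotProduct,
      Fin.sum_univ_three] <;> ring

theorem crossProductMatrix_conj_of_mem_specialOrthogonalGroup {R : Matrix (Fin 3) (Fin 3) ℝ}
    (hR : R ∈ specialOrthogonalGroup (Fin 3) ℝ) (ω : Fin 3 → ℝ) :
    R * crossProductMatrix ω * Rᵀ = crossProductMatrix (R *ᵥ ω) := by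
  obtain ⟨hRo, hdet⟩ := mem_specialOrthogonalGroup_iff.mp hR
  have hadj : R.adjugate = Rᵀ := by
    rw [← inv_eq_right_inv ((mem_orthogonalGroup_iff _ ℝ).mp hRo), inv_def, hdet]
    simp
  rw [mul_crossProductMatrix_mul_transpose, hadj, transpose_transpose]

-- Its rows are the conjugates of the spherical basis vectors
-- `-(e_x + i e_y)/√2`, `e_z`, `(e_x - i e_y)/√2`.
noncomputable def cartesianToSpherical : Matrix (Fin 3) (Fin 3) ℂ :=
  ((Real.sqrt 2 : ℝ) : ℂ)⁻¹ • !![-1, Complex.I, 0; 0, 0, Real.sqrt 2; 1, Complex.I, 0]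

lemma inv_sqrt_two_sq : (((Real.sqrt 2 : ℝ) : ℂ)⁻¹) ^ 2 = 1 / 2 := by
  rw [inv_pow, ← Complex.ofReal_pow, Real.sq_sqrt (by norm_num)]; norm_num

theorem cartesianToSpherical_mem_unitaryGroup :
    cartesianToSpherical ∈ unitaryGroup (Fin 3) ℂ := by
  rw [mem_unitaryGroup_iff, star_eq_conjTranspose]
  ext i j
  fin_cases i <;> fin_cases j <;>
    simp [cartesianToSpherical, mul_apply, Fin.sum_univ_three, conjTranspose_apply] <;>
    ring_nf <;> simp only [Complex.I_sq, inv_sqrt_two_sq] <;> ring_nf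

theorem Sdir_mul_cartesianToSpherical (ω : Fin 3 → ℝ) :
    Sdir ω * cartesianToSpherical =
      cartesianToSpherical * (Complex.I • (crossProductMatrix ω).map Complex.ofRealHom) := by
  ext i j
  fin_cases i <;> fin_cases j <;>
    simp [Sdir, Sx, Sy, Sz, crossProductMatrix, cartesianToSpherical, mul_apply,
      Fin.sum_univ_three] <;>
    ring_nf <;> simp only [Complex.I_sq, inv_sqrt_two_sq] <;> ring_nf

theorem Sdir_eq_conj_crossProductMatrix (ω : Fin 3 → ℝ) :
    Sdir ω = cartesianToSpherical * (Complex.I • (crossProductMatrix ω).map Complex.ofRealHom) *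
      cartesianToSphericalᴴ := by
  rw [← Sdir_mul_cartesianToSpherical, mul_assoc, ← star_eq_conjTranspose,
    Unitary.mul_star_self_of_mem cartesianToSpherical_mem_unitaryGroup, mul_one]

noncomputable def spinOneRep (R : Matrix (Fin 3) (Fin 3) ℝ) : Matrix (Fin 3) (Fin 3) ℂ :=
  cartesianToSpherical * R.map Complex.ofRealHom * cartesianToSphericalᴴ

theorem spinOneRep_mem_unitaryGroup {R : Matrix (Fin 3) (Fin 3) ℝ}
    (hR : R ∈ orthogonalGroup (Fin 3) ℝ) : spinOneRep R ∈ unitaryGroup (Fin 3) ℂ := by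
  have hRc : R.map Complex.ofRealHom ∈ unitaryGroup (Fin 3) ℂ := by
    rw [mem_unitaryGroup_iff, star_eq_conjTranspose, conjTranspose_map_ofRealHom, ← Matrix.map_mul,
      (mem_orthogonalGroup_iff _ ℝ).mp hR, Matrix.map_one _ (map_zero _) (map_one _)]
  exact mul_mem (mul_mem cartesianToSpherical_mem_unitaryGroup hRc)
    (Unitary.star_mem cartesianToSpherical_mem_unitaryGroup)

theorem spinOneRep_conj_Sdir {R : Matrix (Fin 3) (Fin 3) ℝ}
    (hR : R ∈ specialOrthogonalGroup (Fin 3) ℝ) (ω : Fin 3 → ℝ) :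
    spinOneRep R * Sdir ω * (spinOneRep R)ᴴ = Sdir (R *ᵥ ω) := by
  have hZ (A : Matrix (Fin 3) (Fin 3) ℂ) :
      cartesianToSphericalᴴ * (cartesianToSpherical * A) = A := by
    rw [← mul_assoc, ← star_eq_conjTranspose,
      Unitary.star_mul_self_of_mem cartesianToSpherical_mem_unitaryGroup, one_mul]
  rw [Sdir_eq_conj_crossProductMatrix, Sdir_eq_conj_crossProductMatrix,
    ← crossProductMatrix_conj_of_mem_specialOrthogonalGroup hR, Matrix.map_mul, Matrix.map_mul, ← conjTranspose_map_ofRealHom, spinOneRep]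
  simp only [conjTranspose_mul, conjTranspose_conjTranspose, mul_assoc, hZ, Matrix.mul_smul,
    Matrix.smul_mul]

theorem Sdir_eq_sum (u : Fin 3 → ℝ) : Sdir u = ∑ i, (u i : ℂ) • Svec i := by
  simp [Sdir, Svec, Fin.sum_univ_three]

theorem K_eq_sum_Sdir_kronecker (M : Matrix (Fin 3) (Fin 3) ℝ) :
    K M = ∑ j, Sdir (Mᵀ j) ⊗ₖ Svec j := by
  ext ⟨a, b⟩ ⟨c, e⟩
  simp only [K, Sdir_eq_sum, Fin.sum_univ_three, Matrix.sum_apply, Matrix.add_apply,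
    Matrix.smul_apply, kroneckerMap_apply, Complex.coe_smul, Complex.real_smul, transpose_apply]
  ring

theorem K_eq_sum_kronecker_Sdir (M : Matrix (Fin 3) (Fin 3) ℝ) :
    K M = ∑ i, Svec i ⊗ₖ Sdir (M i) := by
  ext ⟨a, b⟩ ⟨c, e⟩
  simp only [K, Sdir_eq_sum, Fin.sum_univ_three, Matrix.sum_apply, Matrix.add_apply,
    Matrix.smul_apply, kroneckerMap_apply, Complex.coe_smul, Complex.real_smul]
  ring

theorem K_mul {R : Matrix (Fin 3) (Fin 3) ℝ} (hR : R ∈ specialOrthogonalGroup (Fin 3) ℝ)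
    (M : Matrix (Fin 3) (Fin 3) ℝ) :
    K (R * M) = (spinOneRep R ⊗ₖ 1) * K M * (spinOneRep R ⊗ₖ 1)ᴴ := by
  rw [K_eq_sum_Sdir_kronecker, K_eq_sum_Sdir_kronecker, Finset.mul_sum, Finset.sum_mul]
  congr! 1 with j
  rw [kronecker_mul_kronecker_mul_conjTranspose, spinOneRep_conj_Sdir hR, one_mul,
    conjTranspose_one, mul_one]
  rfl

theorem K_mul_transpose {R : Matrix (Fin 3) (Fin 3) ℝ}
    (hR : R ∈ specialOrthogonalGroup (Fin 3) ℝ) (M : Matrix (Fin 3) (Fin 3) ℝ) :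
    K (M * Rᵀ) = (1 ⊗ₖ spinOneRep R) * K M * (1 ⊗ₖ spinOneRep R)ᴴ := by
  rw [K_eq_sum_kronecker_Sdir, K_eq_sum_kronecker_Sdir, Finset.mul_sum, Finset.sum_mul]
  congr! 1 with i
  rw [kronecker_mul_kronecker_mul_conjTranspose, spinOneRep_conj_Sdir hR, one_mul,
    conjTranspose_one, mul_one]
  congr 2
  funext k
  simp [mul_apply, mulVec, dotProduct, mul_comm]

theorem K_mul_mul_transpose {U V : Matrix (Fin 3) (Fin 3) ℝ}
    (hU : U ∈ specialOrthogonalGroup (Fin 3) ℝ) (hV : V ∈ specialOrthogonalGroup (Fin 3) ℝ)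
    (M : Matrix (Fin 3) (Fin 3) ℝ) :
    K (U * M * Vᵀ) =
      (spinOneRep U ⊗ₖ spinOneRep V) * K M * (spinOneRep U ⊗ₖ spinOneRep V)ᴴ := by
  have hUV : spinOneRep U ⊗ₖ spinOneRep V = (spinOneRep U ⊗ₖ 1) * (1 ⊗ₖ spinOneRep V) := by
    rw [← mul_kronecker_mul, mul_one, one_mul]
  rw [mul_assoc, K_mul hU, K_mul_transpose hV, hUV, conjTranspose_mul]
  simp only [mul_assoc]

theorem K_diagonal (s t : ℝ) : K (diagonal ![s, 0, t]) = Hst s t := by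
  simp [K, Hst, Svec, Fin.sum_univ_three]

theorem exists_specialOrthogonalGroup_svd_of_charpoly_eq (M : Matrix (Fin 3) (Fin 3) ℝ)
    (s t : ℝ) (hsv : (Mᵀ * M).charpoly = X * (X - C (s ^ 2)) * (X - C (t ^ 2))) :
    ∃ U ∈ specialOrthogonalGroup (Fin 3) ℝ, ∃ V ∈ specialOrthogonalGroup (Fin 3) ℝ,
      M = U * diagonal ![s, 0, t] * Vᵀ := by
  obtain ⟨U, hU, V, hV, hM⟩ := exists_svd_of_charpoly_eq (d := ![s, 0, t]) (by
    rw [hsv, Fin.prod_univ_three]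
    simp only [Matrix.cons_val, zero_pow two_ne_zero, map_zero, sub_zero]
    ring)
  obtain ⟨U', hU', V', hV', h⟩ :=
    exists_specialOrthogonalGroup_mul_diagonal_mul_transpose (d := ![s, 0, t]) (i := 1) rfl hU hV
  exact ⟨U', hU', V', hV', hM.trans h⟩

theorem K_unitarily_equiv_Hst_general
    (M : Matrix (Fin 3) (Fin 3) ℝ)
    (s t : ℝ)
    (hsv : (Mᵀ * M).charpoly = X * (X - C (s ^ 2)) * (X - C (t ^ 2))) :
    ∃ W ∈ Matrix.unitaryGroup (Fin 3 × Fin 3) ℂ,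
      W * K M * Wᴴ = Hst s t := by
  obtain ⟨U, hU, V, hV, rfl⟩ := exists_specialOrthogonalGroup_svd_of_charpoly_eq M s t hsv
  set W := spinOneRep U ⊗ₖ spinOneRep V
  have hW : W ∈ unitaryGroup (Fin 3 × Fin 3) ℂ := kronecker_mem_unitary
    (spinOneRep_mem_unitaryGroup (mem_specialOrthogonalGroup_iff.mp hU).1)
    (spinOneRep_mem_unitaryGroup (mem_specialOrthogonalGroup_iff.mp hV).1)
  have hWW : Wᴴ * W = 1 := Unitary.star_mul_self_of_mem hW
  refine ⟨Wᴴ, Unitary.star_mem hW, ?_⟩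
  rw [K_mul_mul_transpose hU hV, K_diagonal, conjTranspose_conjTranspose, ← mul_assoc,
    ← mul_assoc, hWW, one_mul, mul_assoc, hWW, mul_one]

/-- If `M ∈ M₃(ℝ)` has rank at most 2 and singular values `s, t, 0`
(with `s, t ≥ 0`, i.e. the characteristic polynomial of `MᵀM` is `X(X−s²)(X−t²)`),
then `K(M)` is unitarily equivalent to `H_{s,t} = s·Sx⊗Sx + t·Sz⊗Sz`. -/
theorem K_unitarily_equiv_Hst
    (M : Matrix (Fin 3) (Fin 3) ℝ) (hM : M.rank ≤ 2)
    (s t : ℝ) (hs : 0 ≤ s) (ht : 0 ≤ t)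
    (hsv : (Mᵀ * M).charpoly = X * (X - C (s ^ 2)) * (X - C (t ^ 2))) :
    ∃ W ∈ Matrix.unitaryGroup (Fin 3 × Fin 3) ℂ,
      W * K M * Wᴴ = Hst s t :=
  K_unitarily_equiv_Hst_general M s t hsv
end

section
/- For all s, t ∈ ℝ, the characteristic polynomial of the 9×9 matrix H_{s,t} = s·S_x⊗S_x + t·S_z⊗S_z is X³(X² − s²)(X² − t²)(X² − s² − t²). Consequently, for s, t ≥ 0 the spectrum of H_{s,t} (with multiplicity) is {0, 0, 0, ±s, ±t, ±√(s²+t²)}. -/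
open Matrix Polynomial
open scoped Kronecker Matrix.Norms.L2Operator

/-!
Both `S_x ⊗ S_x` and `S_z ⊗ S_z` preserve the parity of `i + j` on the basis `|i j⟩`, so `H_{s,t}`
splits into a 5×5 block on the even sites `(0,0), (0,2), (1,1), (2,0), (2,2)` and a 4×4 block on
the odd sites `(0,1), (1,0), (1,2), (2,1)`. Expanding their determinants gives
`X (X² − t²)(X² − s² − t²)` and `X² (X² − s²)`.
-/

def parityEquiv : Fin 3 × Fin 3 ≃ Fin 5 ⊕ Fin 4 where
  toFun p := ![![.inl 0, .inr 0, .inl 1], ![.inr 1, .inl 2, .inr 2], ![.inl 3, .inr 3, .inl 4]] p.1 p.2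
  invFun := Sum.elim ![(0, 0), (0, 2), (1, 1), (2, 0), (2, 2)] ![(0, 1), (1, 0), (1, 2), (2, 1)]
  left_inv := by decide
  right_inv := by decide

section Blocks

variable {R : Type*} [CommRing R]

def evenBlock (a b : R) : Matrix (Fin 5) (Fin 5) R :=
  !![b, 0, a, 0, 0; 0, -b, a, 0, 0; a, a, 0, a, a; 0, 0, a, -b, 0; 0, 0, a, 0, b]

def oddBlock (a : R) : Matrix (Fin 4) (Fin 4) R :=
  !![0, a, a, 0; a, 0, 0, a; a, 0, 0, a; 0, a, a, 0]

theorem charpoly_evenBlock (a b : R) :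
    (evenBlock a b).charpoly = X * (X ^ 2 - C (b ^ 2)) * (X ^ 2 - C ((2 * a) ^ 2 + b ^ 2)) := by
  simp [evenBlock, charpoly, det_succ_row_zero, Fin.sum_univ_succ, Fin.succAbove,
    charmatrix_apply, map_ofNat]
  ring

theorem charpoly_oddBlock (a : R) :
    (oddBlock a).charpoly = X ^ 2 * (X ^ 2 - C ((2 * a) ^ 2)) := by
  simp [oddBlock, charpoly, det_succ_row_zero, Fin.sum_univ_succ, Fin.succAbove,
    charmatrix_apply, map_ofNat]
  ring

theorem X_sq_sub_C_sq (a : R) : (X ^ 2 - C (a ^ 2) : R[X]) = (X - C a) * (X - C (-a)) := by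
  simp only [C_neg, C_pow]
  ring

theorem roots_X_pow_three_mul_X_sq_sub_C [IsDomain R] (s t r : R) (hr : r ^ 2 = s ^ 2 + t ^ 2) :
    (X ^ 3 * (X ^ 2 - C (s ^ 2)) * (X ^ 2 - C (t ^ 2)) * (X ^ 2 - C (s ^ 2 + t ^ 2))).roots =
      {0, 0, 0, s, -s, t, -t, r, -r} := by
  rw [← hr, X_sq_sub_C_sq, X_sq_sub_C_sq, X_sq_sub_C_sq,
    ← roots_multiset_prod_X_sub_C ({0, 0, 0, s, -s, t, -t, r, -r} : Multiset R)]
  congr 1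
  simp only [Multiset.insert_eq_cons, Multiset.map_cons, Multiset.prod_cons,
    Multiset.map_singleton, Multiset.prod_singleton, C_0, sub_zero]
  ring

end Blocks

theorem Sx_kronecker_Sx :
    Sx ⊗ₖ Sx = (1 / 2 : ℂ) • (!![0, 1, 0; 1, 0, 1; 0, 1, 0] ⊗ₖ !![0, 1, 0; 1, 0, 1; 0, 1, 0]) := by
  have h : (Real.sqrt 2 : ℂ)⁻¹ * (Real.sqrt 2 : ℂ)⁻¹ = 1 / 2 := by
    rw [← mul_inv, ← Complex.ofReal_mul, Real.mul_self_sqrt zero_le_two]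
    norm_num
  rw [Sx, smul_kronecker, kronecker_smul, smul_smul, h]

theorem reindex_Hst (s t : ℝ) :
    reindex parityEquiv parityEquiv (Hst s t) =
      fromBlocks (evenBlock ((s : ℂ) / 2) t) 0 0 (oddBlock ((s : ℂ) / 2)) := by
  rw [Hst, Sx_kronecker_Sx]
  ext (i | i) (j | j) <;> fin_cases i <;> fin_cases j <;>
    simp [parityEquiv, evenBlock, oddBlock, Sz, div_eq_mul_inv]

theorem charpoly_Hst (s t : ℝ) :
    (Hst s t).charpoly =
      X ^ 3 * (X ^ 2 - C ((s : ℂ) ^ 2)) * (X ^ 2 - C ((t : ℂ) ^ 2)) *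
        (X ^ 2 - C ((s : ℂ) ^ 2 + (t : ℂ) ^ 2)) := by
  rw [← charpoly_reindex parityEquiv, reindex_Hst, charpoly_fromBlocks_zero₂₁,
    charpoly_evenBlock, charpoly_oddBlock, mul_div_cancel₀ _ two_ne_zero]
  ring

/-- The characteristic polynomial of `H_{s,t}` is
`X³(X² − s²)(X² − t²)(X² − s² − t²)`; consequently, for `s, t ≥ 0` its spectrum with
multiplicity (the multiset of roots) is `{0, 0, 0, ±s, ±t, ±√(s²+t²)}`. -/
theorem Hst_charpoly (s t : ℝ) :
    (Hst s t).charpoly =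
        X ^ 3 * (X ^ 2 - C ((s : ℂ) ^ 2)) * (X ^ 2 - C ((t : ℂ) ^ 2)) *
          (X ^ 2 - C ((s : ℂ) ^ 2 + (t : ℂ) ^ 2))
      ∧ (0 ≤ s → 0 ≤ t →
          (Hst s t).charpoly.roots =
            {0, 0, 0, (s : ℂ), -(s : ℂ), (t : ℂ), -(t : ℂ),
              ((Real.sqrt (s ^ 2 + t ^ 2) : ℝ) : ℂ),
              -((Real.sqrt (s ^ 2 + t ^ 2) : ℝ) : ℂ)}) := by
  refine ⟨charpoly_Hst s t, fun _ _ => ?_⟩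
  rw [charpoly_Hst]
  apply roots_X_pow_three_mul_X_sq_sub_C
  rw [← Complex.ofReal_pow, Real.sq_sqrt (by positivity)]
  push_cast
  rfl
end
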